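/- Let Q and Q_n (n ∈ ℕ) be polynomials of degree at most M, let g be analytic on the annulus r₀ < |z| ≤ r (more precisely, on a neighborhood of the circle |z| = r), and define c_n = (1/2πi)∫_{|ω|=r} (Q(ω) − Q_n(ω)) g(ω)/ω^{n+1} dω. If limsup_n ‖Q − Q_n‖^{1/n} = θ' (coefficient norm), then limsup_n |c_n|^{1/n} ≤ θ'/r. -/

import Mathlib

open Filter Polynomial ENNReal NNReal Topology

/-! On the circle `|ω| = r`, `|g| ≤ G` and `|Q(ω) − Qₙ(ω)| ≤ ‖Q − Qₙ‖ · max(1, r)^M`, so the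
Cauchy estimate gives `|cₙ| ≤ K ‖Q − Qₙ‖ / rⁿ` with `K` independent of `n`; taking `n`-th roots,
`K^{1/n} → 1` disappears in the limsup. -/

theorem Polynomial.norm_eval_le_sum_norm_coeff_mul {R : Type*} [SeminormedRing R] [NormOneClass R]
    {p : R[X]} {M : ℕ} (hp : p.degree ≤ M) (z : R) :
    ‖p.eval z‖ ≤ (∑ j ∈ Finset.range (M + 1), ‖p.coeff j‖) * max 1 ‖z‖ ^ M := by
  rw [eval_eq_sum_range' (Nat.lt_succ_of_le (natDegree_le_iff_degree_le.2 hp)), Finset.sum_mul]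
  refine (norm_sum_le _ _).trans (Finset.sum_le_sum fun j hj => ?_)
  calc ‖p.coeff j * z ^ j‖ ≤ ‖p.coeff j‖ * ‖z‖ ^ j := (norm_mul_le _ _).trans
        (mul_le_mul_of_nonneg_left (norm_pow_le _ _) (norm_nonneg _))
    _ ≤ ‖p.coeff j‖ * max 1 ‖z‖ ^ M := by
        gcongr
        calc ‖z‖ ^ j ≤ max 1 ‖z‖ ^ j := by gcongr; exact le_max_right _ _
          _ ≤ max 1 ‖z‖ ^ M := pow_le_pow_right₀ (le_max_left _ _) (Finset.mem_range_succ_iff.1 hj)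

theorem norm_two_pi_I_inv_smul_circleIntegral_div_pow_le {f : ℂ → ℂ} {c : ℂ} {r C : ℝ}
    (hr : 0 < r) (hf : ∀ ω ∈ Metric.sphere c r, ‖f ω‖ ≤ C) (n : ℕ) :
    ‖(2 * Real.pi * Complex.I)⁻¹ • ∮ ω in C(c, r), f ω / (ω - c) ^ (n + 1)‖ ≤ C / r ^ n := by
  have hint : ‖∮ ω in C(c, r), f ω / (ω - c) ^ (n + 1)‖ ≤ 2 * Real.pi * r * (C / r ^ (n + 1)) := by
    refine circleIntegral.norm_integral_le_of_norm_le_const hr.le fun ω hω => ?_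
    rw [norm_div, norm_pow, ← dist_eq_norm, Metric.mem_sphere.1 hω]
    exact div_le_div_of_nonneg_right (hf ω hω) (by positivity)
  have hnorm : ‖(2 * Real.pi * Complex.I)⁻¹‖ = (2 * Real.pi)⁻¹ := by
    simp [abs_of_pos Real.pi_pos]
  calc _ = (2 * Real.pi)⁻¹ * ‖∮ ω in C(c, r), f ω / (ω - c) ^ (n + 1)‖ := by
        rw [norm_smul, hnorm]
    _ ≤ (2 * Real.pi)⁻¹ * (2 * Real.pi * r * (C / r ^ (n + 1))) := by gcongr
    _ = C / r ^ n := by field_simp; ring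

theorem ENNReal.tendsto_rpow_one_div_natCast {K : ℝ≥0∞} (hK0 : K ≠ 0) (hKtop : K ≠ ∞) :
    Tendsto (fun n : ℕ => K ^ (1 / (n : ℝ))) atTop (𝓝 1) := by
  lift K to ℝ≥0 using hKtop
  have hK0' : K ≠ 0 := by exact_mod_cast hK0
  have h := (tendsto_const_nhds (f := atTop) (x := K)).nnrpow
    tendsto_one_div_atTop_nhds_zero_nat (Or.inl hK0')
  rw [NNReal.rpow_zero] at h
  have h' := (ENNReal.continuous_coe.tendsto _).comp h
  rw [Function.comp_def, ENNReal.coe_one] at h'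
  exact h'.congr fun n => ENNReal.coe_rpow_of_ne_zero hK0' _

theorem ENNReal.limsup_rpow_one_div_le_of_le_mul_div_pow {a b : ℕ → ℝ≥0∞} {K ρ : ℝ≥0∞}
    (hK0 : K ≠ 0) (hKtop : K ≠ ∞) (hρ : ρ ≠ 0) (h : ∀ᶠ n in atTop, a n ≤ K * b n / ρ ^ n) :
    limsup (fun n : ℕ => a n ^ (1 / (n : ℝ))) atTop ≤
      limsup (fun n : ℕ => b n ^ (1 / (n : ℝ))) atTop / ρ := by
  have hK := (ENNReal.tendsto_rpow_one_div_natCast hK0 hKtop).limsup_eq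
  have hroot : ∀ᶠ n : ℕ in atTop, a n ^ (1 / (n : ℝ)) ≤
      ρ⁻¹ * (K ^ (1 / (n : ℝ)) * b n ^ (1 / (n : ℝ))) := by
    filter_upwards [h, eventually_ne_atTop 0] with n hn hn0
    have hρn : (ρ ^ n) ^ (1 / (n : ℝ)) = ρ := by
      rw [← ENNReal.rpow_natCast, ← ENNReal.rpow_mul, mul_one_div_cancel (by exact_mod_cast hn0),
        ENNReal.rpow_one]
    calc a n ^ (1 / (n : ℝ)) ≤ (K * b n / ρ ^ n) ^ (1 / (n : ℝ)) := by gcongr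
      _ = ρ⁻¹ * (K ^ (1 / (n : ℝ)) * b n ^ (1 / (n : ℝ))) := by
        rw [ENNReal.div_rpow_of_nonneg _ _ (by positivity),
          ENNReal.mul_rpow_of_nonneg _ _ (by positivity), hρn]
        exact ENNReal.div_eq_inv_mul
  calc limsup (fun n : ℕ => a n ^ (1 / (n : ℝ))) atTop
      ≤ limsup (fun n : ℕ => ρ⁻¹ * (K ^ (1 / (n : ℝ)) * b n ^ (1 / (n : ℝ)))) atTop :=
        limsup_le_limsup hroot
    _ = ρ⁻¹ * limsup (fun n : ℕ => K ^ (1 / (n : ℝ)) * b n ^ (1 / (n : ℝ))) atTop :=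
        ENNReal.limsup_const_mul_of_ne_top (ENNReal.inv_ne_top.2 hρ)
    _ ≤ ρ⁻¹ * limsup (fun n : ℕ => b n ^ (1 / (n : ℝ))) atTop := by
        gcongr
        calc limsup ((fun n : ℕ => K ^ (1 / (n : ℝ))) * fun n => b n ^ (1 / (n : ℝ))) atTop
            ≤ limsup (fun n : ℕ => K ^ (1 / (n : ℝ))) atTop *
                limsup (fun n : ℕ => b n ^ (1 / (n : ℝ))) atTop :=
              ENNReal.limsup_mul_le' (Or.inl (hK ▸ one_ne_zero)) (Or.inl (hK ▸ one_ne_top))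
          _ = limsup (fun n : ℕ => b n ^ (1 / (n : ℝ))) atTop := by rw [hK, one_mul]
    _ = _ := ENNReal.div_eq_inv_mul.symm

/-- Let `Q`, `Q_n` be polynomials of degree ≤ `M`, `g` continuous on the circle `|ω| = r`,
and `c_n = (1/2πi)∮_{|ω|=r} (Q(ω) − Q_n(ω)) g(ω)/ω^{n+1} dω`. If
`limsup ‖Q − Q_n‖^{1/n} = θ'` (coefficient norm), then `limsup |c_n|^{1/n} ≤ θ'/r`. -/
theorem stmt8 (M : ℕ) (Q : Polynomial ℂ) (Qn : ℕ → Polynomial ℂ)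
    (hQ : Q.degree ≤ (M : ℕ)) (hQn : ∀ n, (Qn n).degree ≤ (M : ℕ))
    (r : ℝ) (hr : 0 < r) (g : ℂ → ℂ) (hg : ContinuousOn g (Metric.sphere 0 r))
    (c : ℕ → ℂ)
    (hc : ∀ n : ℕ, c n = (2 * Real.pi * Complex.I)⁻¹ •
      (∮ ω in C(0, r), (Q.eval ω - (Qn n).eval ω) * g ω / ω ^ (n + 1)))
    (θ' : ℝ≥0∞)
    (hθ : Filter.limsup (fun n : ℕ =>
        (ENNReal.ofReal (∑ j ∈ Finset.range (M + 1), ‖(Q - Qn n).coeff j‖))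
          ^ (1 / (n : ℝ))) Filter.atTop = θ') :
    Filter.limsup (fun n : ℕ => (‖c n‖₊ : ℝ≥0∞) ^ (1 / (n : ℝ))) Filter.atTop
      ≤ θ' / ENNReal.ofReal r := by
  obtain ⟨G, hG⟩ := (isCompact_sphere (0 : ℂ) r).exists_bound_of_continuousOn hg
  set S : ℕ → ℝ := fun n => ∑ j ∈ Finset.range (M + 1), ‖(Q - Qn n).coeff j‖
  set K : ℝ := max 1 r ^ M * max G 1
  have hbound (n : ℕ) : ‖c n‖ ≤ K * S n / r ^ n := by
    have hdeg : (Q - Qn n).degree ≤ M := (degree_sub_le _ _).trans (max_le hQ (hQn n))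
    have hnum : ∀ ω ∈ Metric.sphere (0 : ℂ) r,
        ‖(Q.eval ω - (Qn n).eval ω) * g ω‖ ≤ K * S n := fun ω hω => by
      have hωr : ‖ω‖ = r := by simpa using hω
      calc ‖(Q.eval ω - (Qn n).eval ω) * g ω‖ = ‖(Q - Qn n).eval ω‖ * ‖g ω‖ := by
            rw [eval_sub, norm_mul]
        _ ≤ S n * max 1 r ^ M * max G 1 := by
            gcongr
            · simpa only [hωr] using norm_eval_le_sum_norm_coeff_mul hdeg ω
            · exact (hG ω hω).trans (le_max_left _ _)
        _ = K * S n := by ring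
    simpa only [hc n, sub_zero] using norm_two_pi_I_inv_smul_circleIntegral_div_pow_le hr hnum n
  have hK : 0 < K := by positivity
  rw [← hθ]
  refine ENNReal.limsup_rpow_one_div_le_of_le_mul_div_pow (ENNReal.ofReal_pos.2 hK).ne'
    ofReal_ne_top (ENNReal.ofReal_pos.2 hr).ne' (Eventually.of_forall fun n => ?_)
  rw [← ENNReal.ofReal_coe_nnreal, coe_nnnorm, ← ENNReal.ofReal_mul hK.le,
    ← ENNReal.ofReal_pow hr.le, ← ENNReal.ofReal_div_of_pos (pow_pos hr n)]
  exact ENNReal.ofReal_le_ofReal (hbound n)
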